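/- Alternative representation of the asymptotic bias: for all n ∈ ℕ, λ ∈ ℕ, z_{0:n−1} ∈ Z^n, and bounded measurable h on X, the asymptotic bias B_λ⟨z_{0:n−1}⟩(h) = σ²⟨z_{0:n−1}⟩(h) − σ²_{⌊n⌋_λ}⟨z_{0:n−1}⟩(h) admits the representation B_λ⟨z_{0:n−1}⟩(h) = Σ_{m=0}^{⌊n⌋_λ − 1} ∫ η⟨z_{0:m−1}⟩(dx) ( Δ_{δ_x, η⟨z_{0:m−1}⟩}⟨z_{m:n−1}⟩(h, 1_X) / (∏_{ℓ=m}^{n−1} η⟨z_{0:ℓ−1}⟩g_{z_ℓ})² )², where Δ_{μ,μ'}⟨z_{ℓ:m−1}⟩(h, h') = μQ⟨z_{ℓ:m−1}⟩h · μ'Q⟨z_{ℓ:m−1}⟩h' − μQ⟨z_{ℓ:m−1}⟩h' · μ'Q⟨z_{ℓ:m−1}⟩h for probability measures μ, μ' on (X,𝒳). -/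

import Mathlib

/-!
Write `Q_{m,n}` for `Q⟨z_{m:n-1}⟩`. Since `Q_{0,m} Q_{m,n} = Q_{0,n}`, we get
`η_m Q_{m,n} f = γ_n f / γ_m 1`; hence `η_m Q_{m,n} h = η_n h · η_m Q_{m,n} 1`, and
`η_m Q_{m,n} 1 = γ_n 1 / γ_m 1` telescopes into `∏_{ℓ=m}^{n-1} η_ℓ g_{z_ℓ}`.
By linearity of `Q_{m,n}` this gives
`Δ_{δ_x, η_m}(h, 1) = η_m Q_{m,n} 1 · Q_{m,n}(h - η_n h)(x)`, so the `m`-th summand of the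
representation is the `m`-th term of `σ²`, and the bias collects exactly the terms with
`m < ⌊n⌋_λ`.
-/

noncomputable section

section FeynmanKac
open MeasureTheory ProbabilityTheory

variable {X Z : Type*} [MeasurableSpace X] [MeasurableSpace Z]

/-- The unnormalised Feynman-Kac operator `Q⟨z_{k:k+len-1}⟩` acting on functions:
`Q⟨z_{k:m}⟩h(x) = g_{z_k}(x) ∫ Q⟨z_{k+1:m}⟩h(y) M(x,dy)`, the identity when `len = 0`. -/
def Qop (M : Kernel X X) (g : Z → X → ℝ) (z : ℕ → Z) (k len : ℕ) (h : X → ℝ) : X → ℝ :=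
  (List.range len).foldr (fun i acc x => g (z (k + i)) x * ∫ y, acc y ∂(M x)) h

/-- `γ⟨z_{0:n-1}⟩h = χQ⟨z_{0:n-1}⟩h`. -/
def gammaFK (χ : Measure X) (M : Kernel X X) (g : Z → X → ℝ) (z : ℕ → Z)
    (n : ℕ) (h : X → ℝ) : ℝ :=
  ∫ x, Qop M g z 0 n h x ∂χ

/-- The predictor functional `η⟨z_{0:n-1}⟩h = χQ⟨z_{0:n-1}⟩h / χQ⟨z_{0:n-1}⟩1`. -/
def etaFK (χ : Measure X) (M : Kernel X X) (g : Z → X → ℝ) (z : ℕ → Z)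
    (n : ℕ) (h : X → ℝ) : ℝ :=
  gammaFK χ M g z n h / gammaFK χ M g z n (fun _ => 1)

/-- The truncated asymptotic variance
`σ²_ℓ⟨z_{0:n-1}⟩(h) = Σ_{m=ℓ}^n η⟨z_{0:m-1}⟩({Q⟨z_{m:n-1}⟩(h - η⟨z_{0:n-1}⟩h)}²)
  / (η⟨z_{0:m-1}⟩Q⟨z_{m:n-1}⟩1)²`. -/
def sigmaSq (χ : Measure X) (M : Kernel X X) (g : Z → X → ℝ) (z : ℕ → Z)
    (ℓ n : ℕ) (h : X → ℝ) : ℝ :=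
  ∑ m ∈ Finset.Icc ℓ n,
    etaFK χ M g z m
        (fun x => (Qop M g z m (n - m) (fun y => h y - etaFK χ M g z n h) x) ^ 2)
      / (etaFK χ M g z m (Qop M g z m (n - m) (fun _ => 1))) ^ 2

/-- Sup norm `‖h‖_∞` of a (bounded) function. -/
def supn {Y : Type*} (h : Y → ℝ) : ℝ := sSup (Set.range fun x => |h x|)

end FeynmanKac

section Thm
open MeasureTheory ProbabilityTheory

variable {X Z : Type*} [MeasurableSpace X] [MeasurableSpace Z]

/-- `Δ_{μ,μ'}⟨z_{k:k+len-1}⟩(h,h') = μQh ⋅ μ'Qh' - μQh' ⋅ μ'Qh`, where the (probability)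
measures `μ`, `μ'` are represented by their integration functionals. -/
def DeltaFK (M : Kernel X X) (g : Z → X → ℝ) (z : ℕ → Z) (k len : ℕ)
    (μ μ' : (X → ℝ) → ℝ) (h h' : X → ℝ) : ℝ :=
  μ (Qop M g z k len h) * μ' (Qop M g z k len h')
    - μ (Qop M g z k len h') * μ' (Qop M g z k len h)

end Thm

open MeasureTheory ProbabilityTheory

section BoundedFunctions

variable {X : Type*} [MeasurableSpace X]

def BoundedMeasurable (f : X → ℝ) : Prop :=
  Measurable f ∧ ∃ C, ∀ x, |f x| ≤ C

namespace BoundedMeasurable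

lemma const (c : ℝ) : BoundedMeasurable fun _ : X => c :=
  ⟨measurable_const, |c|, fun _ => le_rfl⟩

lemma integrable {f : X → ℝ} (hf : BoundedMeasurable f) (μ : Measure X) [IsFiniteMeasure μ] :
    Integrable f μ :=
  let ⟨hm, C, hC⟩ := hf
  (integrable_const C).mono' hm.aestronglyMeasurable (ae_of_all _ hC)

lemma mul {f f' : X → ℝ} (hf : BoundedMeasurable f) (hf' : BoundedMeasurable f') :
    BoundedMeasurable fun x => f x * f' x := by
  obtain ⟨hm, C, hC⟩ := hf
  obtain ⟨hm', C', hC'⟩ := hf'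
  refine ⟨hm.mul hm', C * C', fun x => ?_⟩
  rw [abs_mul]
  exact mul_le_mul (hC x) (hC' x) (abs_nonneg _) ((abs_nonneg _).trans (hC x))

lemma integral_kernel {Y : Type*} [MeasurableSpace Y] {f : Y → ℝ} (hf : BoundedMeasurable f)
    (κ : Kernel X Y) [IsFiniteKernel κ] : BoundedMeasurable fun x => ∫ y, f y ∂κ x := by
  obtain ⟨hm, C, hC⟩ := hf
  refine ⟨hm.stronglyMeasurable.integral_kernel.measurable, |C| * κ.bound.toReal, fun x => ?_⟩
  calc ‖∫ y, f y ∂κ x‖ ≤ C * (κ x).real Set.univ :=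
        norm_integral_le_of_norm_le_const (ae_of_all _ hC)
    _ ≤ |C| * κ.bound.toReal :=
        mul_le_mul (le_abs_self C)
          (ENNReal.toReal_mono κ.bound_ne_top (κ.measure_le_bound x _)) measureReal_nonneg
          (abs_nonneg C)

end BoundedMeasurable

end BoundedFunctions

lemma integral_pos_of_forall_pos {X : Type*} [MeasurableSpace X] {μ : Measure X} [NeZero μ]
    {f : X → ℝ} (hf : Integrable f μ) (hpos : ∀ x, 0 < f x) : 0 < ∫ x, f x ∂μ := by
  rw [integral_pos_iff_support_of_nonneg (fun x => (hpos x).le) hf,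
    Function.support_eq_univ fun x => (hpos x).ne', Measure.measure_univ_pos]
  exact NeZero.ne μ

section Qop

variable {X Z : Type*} [MeasurableSpace X] {M : Kernel X X} {g : Z → X → ℝ} {z : ℕ → Z}

lemma Qop_zero (k : ℕ) (h : X → ℝ) : Qop M g z k 0 h = h := rfl

lemma Qop_succ (k len : ℕ) (h : X → ℝ) :
    Qop M g z k (len + 1) h = fun x => g (z k) x * ∫ y, Qop M g z (k + 1) len h y ∂M x := by
  unfold Qop
  rw [List.range_succ_eq_map, List.foldr_cons, List.foldr_map]
  simp only [add_zero, Nat.add_succ, add_right_comm k 1]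

lemma Qop_add (k a b : ℕ) (h : X → ℝ) :
    Qop M g z k (a + b) h = Qop M g z k a (Qop M g z (k + a) b h) := by
  induction a generalizing k with
  | zero => rw [zero_add, add_zero, Qop_zero]
  | succ a ih => rw [add_right_comm, Qop_succ, Qop_succ, ih, add_right_comm, add_assoc]

lemma Qop_const_mul (k len : ℕ) (a : ℝ) (h : X → ℝ) :
    Qop M g z k len (fun y => a * h y) = fun x => a * Qop M g z k len h x := by
  induction len generalizing k with
  | zero => rfl
  | succ len ih =>
    simp only [Qop_succ, ih, integral_const_mul]
    funext x
    ring

lemma Qop_one_const_one [IsMarkovKernel M] (k : ℕ) :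
    Qop M g z k 1 (fun _ => 1) = g (z k) := by
  simp [Qop_succ, Qop_zero]

variable [IsFiniteKernel M] (hg : ∀ zz, BoundedMeasurable (g zz))
include hg

lemma boundedMeasurable_Qop (k len : ℕ) {h : X → ℝ} (hh : BoundedMeasurable h) :
    BoundedMeasurable (Qop M g z k len h) := by
  induction len generalizing k with
  | zero => exact hh
  | succ len ih => rw [Qop_succ]; exact (hg (z k)).mul ((ih (k + 1)).integral_kernel M)

lemma Qop_sub (k len : ℕ) {h h' : X → ℝ} (hh : BoundedMeasurable h)
    (hh' : BoundedMeasurable h') :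
    Qop M g z k len (fun y => h y - h' y) =
      fun x => Qop M g z k len h x - Qop M g z k len h' x := by
  induction len generalizing k with
  | zero => rfl
  | succ len ih =>
    funext x
    simp only [Qop_succ, ih]
    rw [integral_sub ((boundedMeasurable_Qop hg _ _ hh).integrable _)
      ((boundedMeasurable_Qop hg _ _ hh').integrable _)]
    ring

lemma Qop_sub_const (k len : ℕ) {h : X → ℝ} (hh : BoundedMeasurable h) (a : ℝ) :
    Qop M g z k len (fun y => h y - a) =
      fun x => Qop M g z k len h x - a * Qop M g z k len (fun _ => 1) x := by
  have hconst : Qop M g z k len (fun _ => a) = fun x => a * Qop M g z k len (fun _ => 1) x := by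
    simpa only [mul_one] using Qop_const_mul (M := M) (g := g) (z := z) k len a fun _ => 1
  rw [Qop_sub hg k len hh (.const a), hconst]

lemma Qop_one_pos [IsMarkovKernel M] (hgpos : ∀ zz x, 0 < g zz x) (k len : ℕ) (x : X) :
    0 < Qop M g z k len (fun _ => 1) x := by
  induction len generalizing k x with
  | zero => exact one_pos
  | succ len ih =>
    rw [Qop_succ]
    exact mul_pos (hgpos _ x) (integral_pos_of_forall_pos
      ((boundedMeasurable_Qop hg _ _ (.const 1)).integrable (M x)) (ih (k + 1)))

end Qop

section Predictor

variable {X Z : Type*} [MeasurableSpace X] {χ : Measure X} {M : Kernel X X} {g : Z → X → ℝ}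
  {z : ℕ → Z}

lemma sigmaSq_sub_sigmaSq {ℓ ℓ' n : ℕ} (hℓ : ℓ ≤ ℓ') (hℓ' : ℓ' ≤ n + 1) (h : X → ℝ) :
    sigmaSq χ M g z ℓ n h - sigmaSq χ M g z ℓ' n h =
      ∑ m ∈ Finset.Ico ℓ ℓ',
        etaFK χ M g z m
            (fun x => (Qop M g z m (n - m) (fun y => h y - etaFK χ M g z n h) x) ^ 2)
          / (etaFK χ M g z m (Qop M g z m (n - m) (fun _ => 1))) ^ 2 := by
  rw [sigmaSq, sigmaSq, ← Finset.Ico_add_one_right_eq_Icc, ← Finset.Ico_add_one_right_eq_Icc,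
    ← Finset.sum_Ico_consecutive _ hℓ hℓ', add_sub_cancel_right]

lemma gammaFK_add (m r : ℕ) (h : X → ℝ) :
    gammaFK χ M g z (m + r) h = gammaFK χ M g z m (Qop M g z m r h) := by
  rw [gammaFK, gammaFK, Qop_add, zero_add]

lemma etaFK_Qop {m n : ℕ} (hmn : m ≤ n) (h : X → ℝ) :
    etaFK χ M g z m (Qop M g z m (n - m) h) =
      gammaFK χ M g z n h / gammaFK χ M g z m (fun _ => 1) := by
  rw [etaFK, ← gammaFK_add, Nat.add_sub_cancel' hmn]

lemma etaFK_Qop_eq_mul {m n : ℕ} (hmn : m ≤ n) (hγ : gammaFK χ M g z n (fun _ => 1) ≠ 0)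
    (h : X → ℝ) :
    etaFK χ M g z m (Qop M g z m (n - m) h) =
      etaFK χ M g z n h * etaFK χ M g z m (Qop M g z m (n - m) (fun _ => 1)) := by
  rw [etaFK_Qop hmn, etaFK_Qop hmn, etaFK]
  field_simp

lemma etaFK_const_mul (m : ℕ) (a : ℝ) (h : X → ℝ) :
    etaFK χ M g z m (fun x => a * h x) = a * etaFK χ M g z m h := by
  simp only [etaFK, gammaFK, Qop_const_mul, integral_const_mul, mul_div_assoc]

lemma DeltaFK_dirac_etaFK [IsFiniteKernel M] (hg : ∀ zz, BoundedMeasurable (g zz)) {m n : ℕ}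
    (hmn : m ≤ n) (hγ : gammaFK χ M g z n (fun _ => 1) ≠ 0) {h : X → ℝ}
    (hh : BoundedMeasurable h) (x : X) :
    DeltaFK M g z m (n - m) (fun f => f x) (etaFK χ M g z m) h (fun _ => 1) =
      etaFK χ M g z m (Qop M g z m (n - m) (fun _ => 1)) *
        Qop M g z m (n - m) (fun y => h y - etaFK χ M g z n h) x := by
  rw [DeltaFK, etaFK_Qop_eq_mul hmn hγ h, Qop_sub_const hg _ _ hh]
  ring

variable [IsMarkovKernel M]

lemma gammaFK_succ_one (m : ℕ) :
    gammaFK χ M g z (m + 1) (fun _ => 1) = gammaFK χ M g z m (g (z m)) := by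
  rw [gammaFK_add, Qop_one_const_one]

variable [IsProbabilityMeasure χ] (hg : ∀ zz, BoundedMeasurable (g zz))
  (hgpos : ∀ zz x, 0 < g zz x)
include hg hgpos

lemma gammaFK_one_pos (m : ℕ) : 0 < gammaFK χ M g z m (fun _ => 1) :=
  integral_pos_of_forall_pos ((boundedMeasurable_Qop hg 0 m (.const 1)).integrable χ)
    (Qop_one_pos hg hgpos 0 m)

lemma prod_etaFK_g_eq_etaFK_Qop_one {m n : ℕ} (hmn : m ≤ n) :
    ∏ ℓ ∈ Finset.Ico m n, etaFK χ M g z ℓ (g (z ℓ)) =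
      etaFK χ M g z m (Qop M g z m (n - m) (fun _ => 1)) := by
  rw [etaFK_Qop hmn]
  induction n, hmn using Nat.le_induction with
  | base => rw [Finset.Ico_self, Finset.prod_empty, div_self (gammaFK_one_pos hg hgpos m).ne']
  | succ n hmn ih =>
    have hγn := (gammaFK_one_pos (χ := χ) (M := M) (z := z) hg hgpos n).ne'
    rw [Finset.prod_Ico_succ_top hmn, ih, etaFK, gammaFK_succ_one]
    field_simp

lemma etaFK_sq_DeltaFK_div_prod {m n : ℕ} (hmn : m ≤ n) {h : X → ℝ}
    (hh : BoundedMeasurable h) :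
    etaFK χ M g z m (fun x =>
        (DeltaFK M g z m (n - m) (fun f => f x) (etaFK χ M g z m) h (fun _ => 1)
          / (∏ ℓ ∈ Finset.Ico m n, etaFK χ M g z ℓ (g (z ℓ))) ^ 2) ^ 2) =
      etaFK χ M g z m
          (fun x => (Qop M g z m (n - m) (fun y => h y - etaFK χ M g z n h) x) ^ 2)
        / (etaFK χ M g z m (Qop M g z m (n - m) (fun _ => 1))) ^ 2 := by
  have hγn := (gammaFK_one_pos (χ := χ) (M := M) (z := z) hg hgpos n).ne'
  have hcancel : ∀ c q : ℝ, (c * q / c ^ 2) ^ 2 = (c ^ 2)⁻¹ * q ^ 2 := fun c q => by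
    rcases eq_or_ne c 0 with hc | hc
    · simp [hc]
    · field_simp
  simp_rw [prod_etaFK_g_eq_etaFK_Qop_one hg hgpos hmn, DeltaFK_dirac_etaFK hg hmn hγn hh,
    hcancel, etaFK_const_mul, inv_mul_eq_div]

end Predictor

section Thm

variable {X Z : Type*} [MeasurableSpace X] [MeasurableSpace Z]

/-- **Alternative representation of the asymptotic bias** (display (23) of Olsson & Douc):
`B_λ⟨z_{0:n-1}⟩(h) = Σ_{m=0}^{⌊n⌋_λ-1} ∫ η⟨z_{0:m-1}⟩(dx)
  (Δ_{δ_x, η⟨z_{0:m-1}⟩}⟨z_{m:n-1}⟩(h, 1) / (∏_{ℓ=m}^{n-1} η⟨z_{0:ℓ-1}⟩g_{z_ℓ})²)²`. -/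
theorem bias_alternative_representation
    (M : Kernel X X) [IsMarkovKernel M] (χ : Measure X) [IsProbabilityMeasure χ]
    (g : Z → X → ℝ) (hgmeas : ∀ zz, Measurable (g zz))
    (hgpos : ∀ zz x, 0 < g zz x) (hgbdd : ∀ zz, ∃ c, ∀ x, g zz x ≤ c)
    (z : ℕ → Z) (n lam : ℕ) (h : X → ℝ) (hh : Measurable h) (hhbdd : ∃ c, ∀ x, |h x| ≤ c) :
    sigmaSq χ M g z 0 n h - sigmaSq χ M g z (n - lam) n h
      = ∑ m ∈ Finset.range (n - lam),
          etaFK χ M g z m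
            (fun x =>
              (DeltaFK M g z m (n - m) (fun f => f x) (etaFK χ M g z m) h (fun _ => 1)
                  / (∏ ℓ ∈ Finset.Ico m n, etaFK χ M g z ℓ (g (z ℓ))) ^ 2) ^ 2) := by
  have hg : ∀ zz, BoundedMeasurable (g zz) := fun zz =>
    ⟨hgmeas zz, (hgbdd zz).imp fun c hc x => (abs_of_pos (hgpos zz x)).trans_le (hc x)⟩
  rw [sigmaSq_sub_sigmaSq (Nat.zero_le _) (by omega), ← Finset.range_eq_Ico]
  refine Finset.sum_congr rfl fun m hm => ?_
  have hmn : m ≤ n := (Finset.mem_range.mp hm).le.trans (Nat.sub_le n lam)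
  exact (etaFK_sq_DeltaFK_div_prod hg hgpos hmn ⟨hh, hhbdd⟩).symm

end Thm

end
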